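/- arXiv:1612.00832 — 8 statements merged into one kernel-verified Lean document; each statement's English description precedes it below -/
import Mathlib

section
/- Let E be a K-algebra generated by x, ∂, ∂₁, ∂₋₁ satisfying ∂_a x - q^a x ∂_a = 1 for a ∈ {-1,0,1} (with ∂₀ = ∂), ∂_a x ∂_b = ∂_b x ∂_a for a ≠ b, and ∂₋₁ ∂₁ = q ∂₁ ∂₋₁. Then (q-1) x ∂₁ ∂₋₁ = ∂₁ - ∂₋₁ and (q-1) ∂₁ ∂₋₁ x = q ∂₁ - q^{-1} ∂₋₁. -/
/-! Both identities come from the `q`-commutation rules `∂₁ x = q x ∂₁ + 1` and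
`∂₋₁ x = q⁻¹ x ∂₋₁ + 1`. Expanding the two sides of `∂₁ x ∂₋₁ = ∂₋₁ x ∂₁` with them (and
`∂₋₁ ∂₁ = q ∂₁ ∂₋₁` on the right) gives `q x ∂₁∂₋₁ + ∂₋₁ = x ∂₁∂₋₁ + ∂₁`, which is the first
identity. Moving `x` to the left through `∂₋₁` and then `∂₁` gives
`∂₁∂₋₁ x = x ∂₁∂₋₁ + q⁻¹ ∂₋₁ + ∂₁`, and the first identity turns this into the second. -/

section QCommutation

variable {K E : Type*} [CommRing K] [Ring E] [Algebra K E]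

theorem mul_eq_smul_add_one_of_sub_smul_eq_one {c : K} {a x : E}
    (h : a * x - c • (x * a) = 1) : a * x = c • (x * a) + 1 :=
  eq_add_of_sub_eq' h

theorem mul_mul_eq_smul_add_of_sub_smul_eq_one {c : K} {a x : E}
    (h : a * x - c • (x * a) = 1) (b : E) : a * x * b = c • (x * (a * b)) + b := by
  rw [mul_eq_smul_add_one_of_sub_smul_eq_one h, add_mul, one_mul, smul_mul_assoc, mul_assoc]

end QCommutation

section QDifferentialOperators

variable {K E : Type*} [Field K] [Ring E] [Algebra K E] {q : K} {x d1 dm1 : E}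

theorem sub_one_smul_mul_mul_eq_sub (hq : q ≠ 0)
    (h1 : d1 * x - q • (x * d1) = 1) (hm1 : dm1 * x - q⁻¹ • (x * dm1) = 1)
    (h1m : d1 * x * dm1 = dm1 * x * d1) (hc : dm1 * d1 = q • (d1 * dm1)) :
    (q - 1) • (x * (d1 * dm1)) = d1 - dm1 := by
  have hright : dm1 * x * d1 = x * (d1 * dm1) + d1 := by
    rw [mul_mul_eq_smul_add_of_sub_smul_eq_one hm1, hc, mul_smul_comm, smul_smul,
      inv_mul_cancel₀ hq, one_smul]
  have hexpanded : q • (x * (d1 * dm1)) + dm1 = x * (d1 * dm1) + d1 := by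
    rw [← mul_mul_eq_smul_add_of_sub_smul_eq_one h1, h1m, hright]
  rw [sub_smul, one_smul, sub_eq_sub_iff_add_eq_add, hexpanded, add_comm]

theorem mul_mul_mul_eq_add_add (hq : q ≠ 0)
    (h1 : d1 * x - q • (x * d1) = 1) (hm1 : dm1 * x - q⁻¹ • (x * dm1) = 1) :
    d1 * dm1 * x = x * (d1 * dm1) + q⁻¹ • dm1 + d1 := by
  rw [mul_assoc, mul_eq_smul_add_one_of_sub_smul_eq_one hm1, mul_add, mul_one, mul_smul_comm,
    ← mul_assoc, mul_mul_eq_smul_add_of_sub_smul_eq_one h1, smul_add, smul_smul,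
    inv_mul_cancel₀ hq, one_smul]

end QDifferentialOperators

theorem stmt4_general {K E : Type*} [Field K] [Ring E] [Algebra K E]
    (q : K) (hq0 : q ≠ 0)
    (x d1 dm1 : E)
    (h1 : d1 * x - q • (x * d1) = 1)
    (hm1 : dm1 * x - q⁻¹ • (x * dm1) = 1)
    (h1m : d1 * x * dm1 = dm1 * x * d1)
    (hc : dm1 * d1 = q • (d1 * dm1)) :
    (q - 1) • (x * (d1 * dm1)) = d1 - dm1 ∧
    (q - 1) • (d1 * dm1 * x) = q • d1 - q⁻¹ • dm1 := by
  have hfirst := sub_one_smul_mul_mul_eq_sub hq0 h1 hm1 h1m hc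
  refine ⟨hfirst, ?_⟩
  have hcoeff : (q - 1) * q⁻¹ = 1 - q⁻¹ := by
    rw [sub_mul, mul_inv_cancel₀ hq0, one_mul]
  rw [mul_mul_mul_eq_add_add hq0 h1 hm1, smul_add, smul_add, hfirst, smul_smul, hcoeff]
  module

/-- In the algebra `E` generated by `x, ∂, ∂₁, ∂₋₁` with the defining relations of
`D_q(K[x])`, one has `(q-1) x ∂₁∂₋₁ = ∂₁ - ∂₋₁` and `(q-1) ∂₁∂₋₁ x = q∂₁ - q⁻¹∂₋₁`. -/
theorem stmt4 {K E : Type*} [Field K] [CharZero K] [Ring E] [Algebra K E]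
    (q : K) (hq0 : q ≠ 0) (hq1 : q ≠ 1)
    (x d0 d1 dm1 : E)
    (h0 : d0 * x - x * d0 = 1)
    (h1 : d1 * x - q • (x * d1) = 1)
    (hm1 : dm1 * x - q⁻¹ • (x * dm1) = 1)
    (h01 : d0 * x * d1 = d1 * x * d0)
    (h0m : d0 * x * dm1 = dm1 * x * d0)
    (h1m : d1 * x * dm1 = dm1 * x * d1)
    (hc : dm1 * d1 = q • (d1 * dm1)) :
    (q - 1) • (x * (d1 * dm1)) = d1 - dm1 ∧
    (q - 1) • (d1 * dm1 * x) = q • d1 - q⁻¹ • dm1 :=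
  stmt4_general q hq0 x d1 dm1 h1 hm1 h1m hc
end

section
/- Let D be the algebra of operators on K[x] generated by x (left multiplication), ∂ (ordinary differentiation's q-analogue with q = 1, i.e. x^n ↦ n x^{n-1}), ∂₁ (x^n ↦ [n]_q x^{n-1}) and ∂₋₁ (x^n ↦ [n]_{q^{-1}} x^{n-1}), where q ∈ K is transcendental over ℚ. Then the operators satisfy ∂₋₁ ∂ ∂₁ = q² ∂₁ ∂ ∂₋₁ as endomorphisms of K[x]. -/
/-!
All three operators lower degree by one and act diagonally on monomials, so both sides send
`X ^ (m + 3)` to a scalar multiple of `X ^ m`. Since `[n]_{q⁻¹} = q^{-(n-1)} [n]_q`, the two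
scalars differ exactly by the factor `q ^ (m + 2) / q ^ m = q ^ 2`.
-/

open Polynomial Finset

theorem geom_sum_inv_eq_inv_pow_mul {K : Type*} [Field K] {q : K} (hq : q ≠ 0) (n : ℕ) :
    ∑ i ∈ range (n + 1), q⁻¹ ^ i = q⁻¹ ^ n * ∑ i ∈ range (n + 1), q ^ i := by
  rw [mul_sum, ← sum_range_reflect]
  refine sum_congr rfl fun i hi => ?_
  rw [add_tsub_cancel_right, pow_sub₀ _ (inv_ne_zero hq) (mem_range_succ_iff.mp hi), ← inv_pow,
    inv_inv]

namespace Module.End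

variable {K : Type*} [CommSemiring K] {A B : Module.End K K[X]}

theorem mul_apply_X_pow {a b : ℕ → K} {s t : ℕ → ℕ} (hA : ∀ n, A (X ^ n) = a n • X ^ s n)
    (hB : ∀ n, B (X ^ n) = b n • X ^ t n) (n : ℕ) :
    (A * B) (X ^ n) = (a (t n) * b n) • X ^ s (t n) := by
  rw [mul_apply, hB, map_smul, hA, smul_smul, mul_comm]

theorem ext_X_pow (h : ∀ n : ℕ, A (X ^ n) = B (X ^ n)) : A = B :=
  (basisMonomials K).ext fun n => by
    simpa [coe_basisMonomials, ← C_mul_X_pow_eq_monomial] using h n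

end Module.End

theorem geom_sum_inv_mul_mul_geom_sum {K : Type*} [Field K] {q : K} (hq : q ≠ 0) (n : ℕ) :
    (∑ i ∈ range (n - 1 - 1), q⁻¹ ^ i) * ((n - 1 : ℕ) : K) * ∑ i ∈ range n, q ^ i =
      q ^ 2 * ((∑ i ∈ range (n - 1 - 1), q ^ i) * ((n - 1 : ℕ) : K) *
        ∑ i ∈ range n, q⁻¹ ^ i) := by
  obtain _ | _ | _ | m := n
  iterate 3 simp
  rw [show m + 1 + 1 + 1 - 1 - 1 = m + 1 by omega, geom_sum_inv_eq_inv_pow_mul hq,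
    geom_sum_inv_eq_inv_pow_mul hq (m + 2), inv_pow, inv_pow]
  field_simp
  ring

/-- For the quantum differential operators `∂, ∂₁, ∂₋₁` on `K[x]` one has
`∂₋₁ ∂ ∂₁ = q² ∂₁ ∂ ∂₋₁`. -/
theorem stmt7 {K : Type*} [Field K] [CharZero K] (q : K) (hq : Transcendental ℚ q)
    (D D1 Dm1 : Module.End K (Polynomial K))
    (hD : ∀ n : ℕ, D (X ^ n) = (n : K) • X ^ (n - 1))
    (hD1 : ∀ n : ℕ, D1 (X ^ n) = (∑ i ∈ Finset.range n, q ^ i) • X ^ (n - 1))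
    (hDm1 : ∀ n : ℕ, Dm1 (X ^ n) = (∑ i ∈ Finset.range n, (q⁻¹) ^ i) • X ^ (n - 1)) :
    Dm1 * D * D1 = (q ^ 2) • (D1 * D * Dm1) := by
  have hq0 : q ≠ 0 := fun h => hq (h ▸ isAlgebraic_zero)
  refine Module.End.ext_X_pow fun n => ?_
  rw [LinearMap.smul_apply,
    Module.End.mul_apply_X_pow (Module.End.mul_apply_X_pow hDm1 hD) hD1,
    Module.End.mul_apply_X_pow (Module.End.mul_apply_X_pow hD1 hD) hDm1,
    smul_smul, geom_sum_inv_mul_mul_geom_sum hq0]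
end

section
/- With ∂, ∂₁, ∂₋₁ the K-linear endomorphisms of K[x] given on monomials by ∂(x^n) = n x^{n-1}, ∂₁(x^n) = [n]_q x^{n-1}, ∂₋₁(x^n) = [n]_{q^{-1}} x^{n-1}, and q ∈ K* not a root of unity, the identity ∂ ∂₋₁ = ∂ ∂₁ - q ∂₁ ∂ + (q-1) ∂₁ ∂₋₁ + q^{-1} ∂₋₁ ∂ holds in End_K(K[x]). -/
/-!
All five operators lower degrees by two, so it suffices to compare them on each monomial `X ^ (m + 1)`.
There the relation becomes an identity between `q`-integers, which follows from
`[n]_{q⁻¹} q ^ n = q [n]_q`, `[m + 1]_q = 1 + q [m]_q` and `q ^ m = 1 + (q - 1) [m]_q`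
after clearing the powers of `q`.
-/

open Polynomial Finset

section GeomSum

variable {K : Type*} [Field K] {q : K}

theorem geom_sum_inv_mul_pow (hq : q ≠ 0) (n : ℕ) :
    (∑ i ∈ range n, q⁻¹ ^ i) * q ^ n = q * ∑ i ∈ range n, q ^ i := by
  induction n with
  | zero => simp
  | succ n ih =>
    rw [sum_range_succ, geom_sum_succ, pow_succ, inv_pow, add_mul, ← mul_assoc, ih,
      inv_mul_cancel_left₀ (pow_ne_zero n hq)]
    ring

/-- The relation applied to `X ^ (m + 1)`, read off on the coefficient of `X ^ (m - 1)`. -/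
theorem geom_sum_quadratic_relation (hq : q ≠ 0) (m : ℕ) :
    m * ∑ i ∈ range (m + 1), q⁻¹ ^ i
      = m * ∑ i ∈ range (m + 1), q ^ i - q * ((m + 1) * ∑ i ∈ range m, q ^ i)
        + (q - 1) * ((∑ i ∈ range m, q ^ i) * ∑ i ∈ range (m + 1), q⁻¹ ^ i)
        + q⁻¹ * ((m + 1) * ∑ i ∈ range m, q⁻¹ ^ i) := by
  set s := ∑ i ∈ range m, q ^ i
  have hpow : q ^ m = 1 + (q - 1) * s := by linear_combination (-1 : K) * geom_sum_mul q m
  have hsucc : ∑ i ∈ range (m + 1), q ^ i = 1 + q * s := by rw [geom_sum_succ]; ring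
  have hinv := geom_sum_inv_mul_pow hq m
  have hinv_succ := geom_sum_inv_mul_pow hq (m + 1)
  rw [hsucc] at hinv_succ ⊢
  refine mul_left_cancel₀ (pow_ne_zero (m + 1) hq) ?_
  rw [pow_succ] at hinv_succ ⊢
  linear_combination (m - (q - 1) * s) * hinv_succ - (m + 1) * hinv
    + (q ^ 2 * (m + 1) * s - m * (1 + q * s) * q) * hpow
    - (m + 1) * (∑ i ∈ range m, q⁻¹ ^ i) * q ^ m * inv_mul_cancel₀ hq

end GeomSum

theorem stmt8_general {K : Type*} [Field K] (q : K) (hq0 : q ≠ 0)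
    (D D1 Dm1 : Module.End K (Polynomial K))
    (hD : ∀ n : ℕ, D (X ^ n) = (n : K) • X ^ (n - 1))
    (hD1 : ∀ n : ℕ, D1 (X ^ n) = (∑ i ∈ Finset.range n, q ^ i) • X ^ (n - 1))
    (hDm1 : ∀ n : ℕ, Dm1 (X ^ n) = (∑ i ∈ Finset.range n, (q⁻¹) ^ i) • X ^ (n - 1)) :
    D * Dm1 = D * D1 - q • (D1 * D) + (q - 1) • (D1 * Dm1) + q⁻¹ • (Dm1 * D) := by
  refine (basisMonomials K).ext fun n => ?_
  simp only [coe_basisMonomials, monomial_one_right_eq_X_pow, Module.End.mul_apply, LinearMap.sub_apply, LinearMap.add_apply,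
    LinearMap.smul_apply, hD, hD1, hDm1, map_smul, smul_smul, ← sub_smul, ← add_smul]
  rcases n with _ | m
  · simp
  · congr 1
    push_cast [Nat.add_sub_cancel]
    linear_combination geom_sum_quadratic_relation hq0 m

/-- The quadratic relation `∂∂₋₁ = ∂∂₁ - q∂₁∂ + (q-1)∂₁∂₋₁ + q⁻¹∂₋₁∂`
for the operators `∂, ∂₁, ∂₋₁` on `K[x]`. -/
theorem stmt8 {K : Type*} [Field K] [CharZero K] (q : K) (hq0 : q ≠ 0)
    (hq : ∀ n : ℕ, 0 < n → q ^ n ≠ 1)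
    (D D1 Dm1 : Module.End K (Polynomial K))
    (hD : ∀ n : ℕ, D (X ^ n) = (n : K) • X ^ (n - 1))
    (hD1 : ∀ n : ℕ, D1 (X ^ n) = (∑ i ∈ Finset.range n, q ^ i) • X ^ (n - 1))
    (hDm1 : ∀ n : ℕ, Dm1 (X ^ n) = (∑ i ∈ Finset.range n, (q⁻¹) ^ i) • X ^ (n - 1)) :
    D * Dm1 = D * D1 - q • (D1 * D) + (q - 1) • (D1 * Dm1) + q⁻¹ • (Dm1 * D) :=
  stmt8_general q hq0 D D1 Dm1 hD hD1 hDm1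
end

section
/- Let A be a domain, C a subring of A with a ∈ C a nonzero element satisfying aC = Ca (a is normal in C). Let D = { d ∈ A : d a^k ∈ aC for some natural number k }. Then D is a subring of A. Consequently, if A is generated as a ring by elements of D, then for every r ∈ A there exists k with r a^k ∈ aC. -/
/-!
Normality of `a` lets elements of `C` be moved past powers of `a`: `c * a ^ k = a ^ k * c'`.
Hence the exponent in `d * a ^ k ∈ a * C` can always be enlarged, so two elements of `D` share
an exponent, which gives closure under addition; for a product, `x * y * a ^ (m + k)` becomes
`x * a * c' * a ^ k = x * a ^ (k + 1) * c''`, and `x * a ^ (k + 1) ∈ a * C`.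
-/

section SeminormalLocus

variable {A : Type*} [Ring A] {C : Subring A} {a : A}

variable (C a) in
def seminormalLocus : Set A := {d | ∃ k : ℕ, ∃ c ∈ C, d * a ^ k = a * c}

theorem exists_mul_pow_eq_pow_mul (hnorm : ∀ c ∈ C, ∃ c' ∈ C, c * a = a * c') (k : ℕ) :
    ∀ c ∈ C, ∃ c' ∈ C, c * a ^ k = a ^ k * c' := by
  induction k with
  | zero => exact fun c hc => ⟨c, hc, by simp⟩
  | succ k ih =>
    intro c hc
    obtain ⟨c₁, hc₁, h₁⟩ := hnorm c hc
    obtain ⟨c₂, hc₂, h₂⟩ := ih c₁ hc₁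
    exact ⟨c₂, hc₂, by rw [pow_succ', ← mul_assoc, h₁, mul_assoc, h₂, mul_assoc]⟩

theorem exists_mul_pow_eq_mul_of_le (ha : a ∈ C) (hnorm : ∀ c ∈ C, ∃ c' ∈ C, c * a = a * c')
    {d c : A} {k l : ℕ} (hc : c ∈ C) (hd : d * a ^ k = a * c) (hkl : k ≤ l) :
    ∃ c' ∈ C, d * a ^ l = a * c' := by
  obtain ⟨c₁, hc₁, h₁⟩ := exists_mul_pow_eq_pow_mul hnorm (l - k) c hc
  refine ⟨a ^ (l - k) * c₁, mul_mem (pow_mem ha _) hc₁, ?_⟩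
  rw [← Nat.add_sub_cancel' hkl, pow_add, ← mul_assoc, hd, mul_assoc, h₁, Nat.add_sub_cancel_left]

namespace seminormalLocus

theorem zero_mem : (0 : A) ∈ seminormalLocus C a := ⟨0, 0, C.zero_mem, by simp⟩

theorem one_mem : (1 : A) ∈ seminormalLocus C a := ⟨1, 1, C.one_mem, by simp⟩

theorem neg_mem {x : A} (hx : x ∈ seminormalLocus C a) : -x ∈ seminormalLocus C a := by
  obtain ⟨k, c, hc, h⟩ := hx
  exact ⟨k, -c, C.neg_mem hc, by rw [neg_mul, h, mul_neg]⟩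

variable (ha : a ∈ C) (hnorm : ∀ c ∈ C, ∃ c' ∈ C, c * a = a * c')
include ha hnorm

theorem add_mem {x y : A} (hx : x ∈ seminormalLocus C a) (hy : y ∈ seminormalLocus C a) :
    x + y ∈ seminormalLocus C a := by
  obtain ⟨k, c, hc, hxk⟩ := hx
  obtain ⟨m, c', hc', hym⟩ := hy
  obtain ⟨c₁, hc₁, h₁⟩ := exists_mul_pow_eq_mul_of_le ha hnorm hc hxk (k.le_add_right m)
  obtain ⟨c₂, hc₂, h₂⟩ := exists_mul_pow_eq_mul_of_le ha hnorm hc' hym (m.le_add_left k)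
  exact ⟨k + m, c₁ + c₂, C.add_mem hc₁ hc₂, by rw [add_mul, h₁, h₂, mul_add]⟩

theorem mul_mem {x y : A} (hx : x ∈ seminormalLocus C a) (hy : y ∈ seminormalLocus C a) :
    x * y ∈ seminormalLocus C a := by
  obtain ⟨k, c, hc, hxk⟩ := hx
  obtain ⟨m, c', hc', hym⟩ := hy
  obtain ⟨c'', hc'', hswap⟩ := exists_mul_pow_eq_pow_mul hnorm k c' hc'
  obtain ⟨c₁, hc₁, h₁⟩ := exists_mul_pow_eq_mul_of_le ha hnorm hc hxk k.le_succ
  refine ⟨m + k, c₁ * c'', C.mul_mem hc₁ hc'', ?_⟩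
  calc x * y * a ^ (m + k) = x * (y * a ^ m) * a ^ k := by simp only [pow_add, mul_assoc]
    _ = x * a * (c' * a ^ k) := by simp only [hym, mul_assoc]
    _ = x * a ^ (k + 1) * c'' := by rw [hswap, pow_succ', ← mul_assoc, ← mul_assoc]
    _ = a * (c₁ * c'') := by rw [h₁, mul_assoc]

end seminormalLocus

def seminormalSubring (ha : a ∈ C) (hnorm : ∀ c ∈ C, ∃ c' ∈ C, c * a = a * c') : Subring A where
  carrier := seminormalLocus C a
  zero_mem' := seminormalLocus.zero_mem
  one_mem' := seminormalLocus.one_mem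
  neg_mem' := seminormalLocus.neg_mem
  add_mem' := seminormalLocus.add_mem ha hnorm
  mul_mem' := seminormalLocus.mul_mem ha hnorm

end SeminormalLocus

theorem stmt10_general {A : Type*} [Ring A] (C : Subring A) (a : A)
    (ha : a ∈ C)
    (hnorm : {x | ∃ c ∈ C, x = a * c} = {x | ∃ c ∈ C, x = c * a}) :
    (∃ D : Subring A, (D : Set A) = {d | ∃ k : ℕ, ∃ c ∈ C, d * a ^ k = a * c}) ∧
    (Subring.closure {d | ∃ k : ℕ, ∃ c ∈ C, d * a ^ k = a * c} = ⊤ →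
      ∀ r : A, ∃ k : ℕ, ∃ c ∈ C, r * a ^ k = a * c) := by
  have hCa : ∀ c ∈ C, ∃ c' ∈ C, c * a = a * c' := fun c hc => by
    obtain ⟨c', hc', h⟩ : c * a ∈ {x | ∃ c ∈ C, x = a * c} := hnorm ▸ ⟨c, hc, rfl⟩
    exact ⟨c', hc', h⟩
  let D := seminormalSubring ha hCa
  refine ⟨⟨D, rfl⟩, fun hgen r => ?_⟩
  have hle : Subring.closure (seminormalLocus C a) ≤ D := Subring.closure_le.2 le_rfl
  exact (hgen ▸ hle) (Subring.mem_top r)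

/-- If `a` is a nonzero element of a subring `C` of a domain `A` with `aC = Ca`, then
`D = {d ∈ A : d aᵏ ∈ aC for some k}` is a subring of `A`; consequently if `A` is generated
as a ring by elements of `D` then `a` is right `C`-seminormal in `A`. -/
theorem stmt10 {A : Type*} [Ring A] [IsDomain A] (C : Subring A) (a : A)
    (ha : a ∈ C) (ha0 : a ≠ 0)
    (hnorm : {x | ∃ c ∈ C, x = a * c} = {x | ∃ c ∈ C, x = c * a}) :
    (∃ D : Subring A, (D : Set A) = {d | ∃ k : ℕ, ∃ c ∈ C, d * a ^ k = a * c}) ∧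
    (Subring.closure {d | ∃ k : ℕ, ∃ c ∈ C, d * a ^ k = a * c} = ⊤ →
      ∀ r : A, ∃ k : ℕ, ∃ c ∈ C, r * a ^ k = a * c) :=
  stmt10_general C a ha hnorm
end

section
/- Let A be a domain, C a subring of A containing a nonzero element a with aC = Ca, and suppose for every r ∈ A there exists k ∈ ℕ with r a^k ∈ aC (a is right C-seminormal in A). Then the set {a^i : i ∈ ℕ} is a right Ore set in A. -/
theorem exists_mul_pow_eq_pow_mul_of_exists_mul_pow_eq_mul {M : Type*} [Monoid M] {a : M}
    (h : ∀ r : M, ∃ k : ℕ, ∃ c, r * a ^ k = a * c) (r : M) (j : ℕ) :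
    ∃ r' : M, ∃ j' : ℕ, r * a ^ j' = a ^ j * r' := by
  induction j with
  | zero => exact ⟨r, 0, by simp⟩
  | succ j ih =>
    obtain ⟨r', j', hr'⟩ := ih
    obtain ⟨k, c, hc⟩ := h r'
    refine ⟨c, j' + k, ?_⟩
    calc r * a ^ (j' + k) = r * a ^ j' * a ^ k := by rw [pow_add, mul_assoc]
      _ = a ^ j * (r' * a ^ k) := by rw [hr', mul_assoc]
      _ = a ^ (j + 1) * c := by rw [hc, ← mul_assoc, pow_succ]

theorem stmt11_general {A : Type*} [Ring A] (C : Subring A) (a : A)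
    (hsemi : ∀ r : A, ∃ k : ℕ, ∃ c ∈ C, r * a ^ k = a * c) :
    ∀ r : A, ∀ j : ℕ, ∃ r' : A, ∃ j' : ℕ, r * a ^ j' = a ^ j * r' :=
  exists_mul_pow_eq_pow_mul_of_exists_mul_pow_eq_mul fun r ↦
    let ⟨k, c, _, hc⟩ := hsemi r
    ⟨k, c, hc⟩

/-- If `a` is right `C`-seminormal in the domain `A`, then the powers of `a` form a
right Ore set in `A`. -/
theorem stmt11 {A : Type*} [Ring A] [IsDomain A] (C : Subring A) (a : A)
    (ha : a ∈ C) (ha0 : a ≠ 0)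
    (hnorm : {x | ∃ c ∈ C, x = a * c} = {x | ∃ c ∈ C, x = c * a})
    (hsemi : ∀ r : A, ∃ k : ℕ, ∃ c ∈ C, r * a ^ k = a * c) :
    ∀ r : A, ∀ j : ℕ, ∃ r' : A, ∃ j' : ℕ, r * a ^ j' = a ^ j * r' :=
  stmt11_general C a hsemi
end

section
/- Let T be a commutative domain with a derivation δ, let A = T[t; δ] be the Ore extension (so tb = bt + δ(b) for b ∈ T), and let a ∈ T be nonzero. Let C be the subring of A generated by T and at. Then a is normal in C and t·a² = a·(at + 2δ(a)), so a is right C-seminormal in A. -/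
/-!
Every generator of `C` slides past `a` in both directions: elements of `T` commute with `a`,
and `(a t) a = a (a t + δ a)`, `a (a t) = (a t - δ a) a`. Since the elements sliding past `a`
form a subring, `aC = Ca`. Iterating, `C a^k ⊆ a^k C`, and with this the elements `r` with
`r a^k ∈ aC` for some `k` form a subring too; it contains `T` and, by `t a² = a (a t + 2 δ a)`,
also `t`, hence all of `A`.
-/

namespace Subring

variable {A : Type*} [Ring A] {C : Subring A} {a : A} {S : Set A}

theorem exists_mul_eq_mul_of_mem_closure (hS : ∀ s ∈ S, ∃ c ∈ C, s * a = a * c)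
    {x : A} (hx : x ∈ closure S) : ∃ c ∈ C, x * a = a * c := by
  induction hx using closure_induction with
  | mem s hs => exact hS s hs
  | zero => exact ⟨0, C.zero_mem, by simp⟩
  | one => exact ⟨1, C.one_mem, by simp⟩
  | add x y _ _ hx hy =>
    obtain ⟨c, hc, hxc⟩ := hx
    obtain ⟨d, hd, hyd⟩ := hy
    exact ⟨c + d, C.add_mem hc hd, by rw [add_mul, hxc, hyd, mul_add]⟩
  | neg x _ hx =>
    obtain ⟨c, hc, hxc⟩ := hx
    exact ⟨-c, C.neg_mem hc, by rw [neg_mul, hxc, mul_neg]⟩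
  | mul x y _ _ hx hy =>
    obtain ⟨c, hc, hxc⟩ := hx
    obtain ⟨d, hd, hyd⟩ := hy
    exact ⟨c * d, C.mul_mem hc hd, by rw [mul_assoc, hyd, ← mul_assoc, hxc, mul_assoc]⟩

theorem exists_mul_eq_mul_of_mem_closure' (hS : ∀ s ∈ S, ∃ c ∈ C, a * s = c * a)
    {x : A} (hx : x ∈ closure S) : ∃ c ∈ C, a * x = c * a := by
  induction hx using closure_induction with
  | mem s hs => exact hS s hs
  | zero => exact ⟨0, C.zero_mem, by simp⟩
  | one => exact ⟨1, C.one_mem, by simp⟩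
  | add x y _ _ hx hy =>
    obtain ⟨c, hc, hxc⟩ := hx
    obtain ⟨d, hd, hyd⟩ := hy
    exact ⟨c + d, C.add_mem hc hd, by rw [mul_add, hxc, hyd, add_mul]⟩
  | neg x _ hx =>
    obtain ⟨c, hc, hxc⟩ := hx
    exact ⟨-c, C.neg_mem hc, by rw [mul_neg, hxc, neg_mul]⟩
  | mul x y _ _ hx hy =>
    obtain ⟨c, hc, hxc⟩ := hx
    obtain ⟨d, hd, hyd⟩ := hy
    exact ⟨c * d, C.mul_mem hc hd, by rw [← mul_assoc, hxc, mul_assoc, hyd, mul_assoc]⟩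

theorem exists_mul_pow_eq_pow_mul (hC : ∀ c ∈ C, ∃ d ∈ C, c * a = a * d) (k : ℕ)
    {c : A} (hc : c ∈ C) : ∃ d ∈ C, c * a ^ k = a ^ k * d := by
  induction k generalizing c with
  | zero => exact ⟨c, hc, by simp⟩
  | succ k ih =>
    obtain ⟨d, hd, hcd⟩ := hC c hc
    obtain ⟨e, he, hde⟩ := ih hd
    exact ⟨e, he, by rw [pow_succ', ← mul_assoc, hcd, mul_assoc, hde, ← mul_assoc]⟩

theorem exists_mul_pow_eq_mul_of_mem_closure (haC : a ∈ C)
    (hC : ∀ c ∈ C, ∃ d ∈ C, c * a = a * d) (hS : ∀ s ∈ S, ∃ k : ℕ, ∃ c ∈ C, s * a ^ k = a * c)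
    {x : A} (hx : x ∈ closure S) : ∃ k : ℕ, ∃ c ∈ C, x * a ^ k = a * c := by
  induction hx using closure_induction with
  | mem s hs => exact hS s hs
  | zero => exact ⟨0, 0, C.zero_mem, by simp⟩
  | one => exact ⟨1, 1, C.one_mem, by simp⟩
  | add x y _ _ hx hy =>
    obtain ⟨k, c, hc, hxc⟩ := hx
    obtain ⟨l, d, hd, hyd⟩ := hy
    refine ⟨k + l, c * a ^ l + d * a ^ k,
      C.add_mem (C.mul_mem hc (C.pow_mem haC l)) (C.mul_mem hd (C.pow_mem haC k)), ?_⟩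
    rw [add_mul, mul_add, ← mul_assoc, ← mul_assoc, ← hxc, ← hyd, mul_assoc, mul_assoc,
      ← pow_add, ← pow_add, add_comm l]
  | neg x _ hx =>
    obtain ⟨k, c, hc, hxc⟩ := hx
    exact ⟨k, -c, C.neg_mem hc, by rw [neg_mul, hxc, mul_neg]⟩
  | mul x y _ _ hx hy =>
    obtain ⟨k, c, hc, hxc⟩ := hx
    obtain ⟨l, d, hd, hyd⟩ := hy
    obtain ⟨e, he, hde⟩ := exists_mul_pow_eq_pow_mul hC k hd
    refine ⟨l + k, c * (a * e), C.mul_mem hc (C.mul_mem haC he), ?_⟩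
    calc x * y * a ^ (l + k) = x * (a * (d * a ^ k)) := by
          rw [pow_add, ← mul_assoc a d, ← hyd]
          simp only [mul_assoc]
      _ = x * a ^ k * (a * e) := by
          rw [hde, ← mul_assoc a, ← pow_succ', pow_succ]
          simp only [mul_assoc]
      _ = a * (c * (a * e)) := by rw [hxc, mul_assoc]

end Subring

section SkewRelation

variable {A : Type*} [Ring A] {a t d : A}

theorem mul_mul_eq_mul_mul_add (hta : t * a = a * t + d) : a * t * a = a * (a * t + d) := by
  rw [mul_assoc, hta]

theorem mul_mul_eq_mul_sub_mul (hta : t * a = a * t + d) (hda : d * a = a * d) :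
    a * (a * t) = (a * t - d) * a := by
  rw [sub_mul, mul_mul_eq_mul_mul_add hta, hda, mul_add, add_sub_cancel_right]

theorem mul_sq_eq_mul_mul_add_two_mul (hta : t * a = a * t + d) (hda : d * a = a * d) :
    t * a ^ 2 = a * (a * t + 2 * d) := by
  rw [sq, ← mul_assoc, hta, add_mul, mul_mul_eq_mul_mul_add hta, hda, ← mul_add, add_assoc,
    two_mul]

end SkewRelation

theorem stmt12_general {A : Type*} [Ring A] (T : Subring A)
    (hcomm : ∀ x ∈ T, ∀ y ∈ T, x * y = y * x)
    (t : A) (δ : A → A)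
    (hδmem : ∀ b ∈ T, δ b ∈ T)
    (hrel : ∀ b ∈ T, t * b = b * t + δ b)
    (hgen : Subring.closure ((T : Set A) ∪ {t}) = ⊤)
    (a : A) (haT : a ∈ T)
    (C : Subring A) (hC : C = Subring.closure ((T : Set A) ∪ {a * t})) :
    ({x | ∃ c ∈ C, x = a * c} = {x | ∃ c ∈ C, x = c * a}) ∧
    t * a ^ 2 = a * (a * t + 2 * δ a) ∧
    (∀ r : A, ∃ k : ℕ, ∃ c ∈ C, r * a ^ k = a * c) := by
  have hTC : (T : Set A) ⊆ C := hC ▸ fun b hb ↦ Subring.subset_closure (Or.inl hb)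
  have hatC : a * t ∈ C := hC ▸ Subring.subset_closure (Or.inr rfl)
  have hδaC : δ a ∈ C := hTC (hδmem a haT)
  have hta := hrel a haT
  have hδa := hcomm _ (hδmem a haT) a haT
  have hsq := mul_sq_eq_mul_mul_add_two_mul hta hδa
  have hright : ∀ c ∈ C, ∃ d ∈ C, c * a = a * d := fun c hc ↦ by
    refine Subring.exists_mul_eq_mul_of_mem_closure ?_ (hC ▸ hc)
    rintro s (hs | rfl)
    exacts [⟨s, hTC hs, hcomm s hs a haT⟩,
      ⟨_, C.add_mem hatC hδaC, mul_mul_eq_mul_mul_add hta⟩]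
  have hleft : ∀ c ∈ C, ∃ d ∈ C, a * c = d * a := fun c hc ↦ by
    refine Subring.exists_mul_eq_mul_of_mem_closure' ?_ (hC ▸ hc)
    rintro s (hs | rfl)
    exacts [⟨s, hTC hs, hcomm a haT s hs⟩,
      ⟨_, C.sub_mem hatC hδaC, mul_mul_eq_mul_sub_mul hta hδa⟩]
  refine ⟨?_, hsq, fun r ↦ ?_⟩
  · ext x
    exact ⟨fun ⟨c, hc, hx⟩ ↦ hx ▸ hleft c hc, fun ⟨c, hc, hx⟩ ↦ hx ▸ hright c hc⟩
  · refine Subring.exists_mul_pow_eq_mul_of_mem_closure (hTC haT) hright ?_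
      (hgen.symm ▸ Subring.mem_top r)
    rintro s (hs | rfl)
    exacts [⟨1, s, hTC hs, by rw [pow_one, hcomm s hs a haT]⟩,
      ⟨2, _, C.add_mem hatC (two_mul (δ a) ▸ C.add_mem hδaC hδaC), hsq⟩]

/-- In an Ore extension `A = T[t;δ]` of a commutative domain `T` (so `t b = b t + δ(b)`
for `b ∈ T`), for `0 ≠ a ∈ T` and `C` the subring generated by `T` and `at`:
`a` is normal in `C`, `t a² = a(at + 2δ(a))`, and `a` is right `C`-seminormal in `A`. -/
theorem stmt12 {A : Type*} [Ring A] [IsDomain A] (T : Subring A)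
    (hcomm : ∀ x ∈ T, ∀ y ∈ T, x * y = y * x)
    (t : A) (δ : A → A)
    (hδmem : ∀ b ∈ T, δ b ∈ T)
    (hδadd : ∀ b ∈ T, ∀ c ∈ T, δ (b + c) = δ b + δ c)
    (hδmul : ∀ b ∈ T, ∀ c ∈ T, δ (b * c) = δ b * c + b * δ c)
    (hrel : ∀ b ∈ T, t * b = b * t + δ b)
    (hgen : Subring.closure ((T : Set A) ∪ {t}) = ⊤)
    (a : A) (haT : a ∈ T) (ha0 : a ≠ 0)
    (C : Subring A) (hC : C = Subring.closure ((T : Set A) ∪ {a * t})) :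
    ({x | ∃ c ∈ C, x = a * c} = {x | ∃ c ∈ C, x = c * a}) ∧
    t * a ^ 2 = a * (a * t + 2 * δ a) ∧
    (∀ r : A, ∃ k : ℕ, ∃ c ∈ C, r * a ^ k = a * c) :=
  stmt12_general T hcomm t δ hδmem hrel hgen a haT C hC
end

section
/- Let D be the K-algebra generated by x, ∂, ∂₁, ∂₋₁ acting on K[x] (where ∂_a(x^n) = [n]_{q^a} x^{n-1} and q transcendental over ℚ). Then for all j ≥ 1, [j]_q ∂^j ≡ j q^j ∂₁ ∂^{j-1} (mod Dx), where Dx is the left ideal generated by x. -/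
/-!
The witness is `u = ∂ʲ ∂₁ - qʲ ∂₁ ∂ʲ`. Both sides of `[j]_q ∂ʲ - j qʲ ∂₁ ∂^{j-1} = u x` lower
degrees by exactly `j`, so it suffices to compare them on monomials; with `n = j - 1 + m` the
comparison of coefficients reduces to `[j + m]_q = [j]_q + qʲ [m]_q`.
-/

open Polynomial Finset

section

variable {R : Type*} [CommRing R]

theorem Polynomial.linearMap_ext_X_pow {M : Type*} [AddCommGroup M] [Module R M]
    {f g : R[X] →ₗ[R] M} (h : ∀ n : ℕ, f (X ^ n) = g (X ^ n)) : f = g :=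
  (basisMonomials R).ext fun n => by simpa [coe_basisMonomials, X_pow_eq_monomial] using h n

theorem geom_sum_range_add (q : R) (a b : ℕ) :
    ∑ i ∈ range (a + b), q ^ i = ∑ i ∈ range a, q ^ i + q ^ a * ∑ i ∈ range b, q ^ i := by
  simp [sum_range_add, pow_add, mul_sum]

theorem geom_sum_mul_descFactorial_sub_eq (q : R) (k n : ℕ) :
    (∑ i ∈ range (k + 1), q ^ i) * n.descFactorial (k + 1)
        - ((k + 1 : R) * q ^ (k + 1)) * (n.descFactorial k * ∑ i ∈ range (n - k), q ^ i)
      = (∑ i ∈ range (n + 1), q ^ i) * n.descFactorial (k + 1)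
        - q ^ (k + 1) * ((n + 1).descFactorial (k + 1) * ∑ i ∈ range (n - k), q ^ i) := by
  rw [Nat.descFactorial_succ, Nat.succ_descFactorial_succ]
  rcases le_or_gt k n with hkn | hnk
  · obtain ⟨m, rfl⟩ := Nat.exists_eq_add_of_le hkn
    rw [add_right_comm, geom_sum_range_add q (k + 1) m, Nat.add_sub_cancel_left]
    push_cast
    ring
  · simp [Nat.descFactorial_eq_zero_iff_lt.mpr hnk]

theorem Module.End.pow_apply_X_pow_of_apply_X_pow {D : Module.End R R[X]}
    (hD : ∀ n : ℕ, D (X ^ n) = (n : R) • X ^ (n - 1)) (k n : ℕ) :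
    (D ^ k) (X ^ n) = (n.descFactorial k : R) • X ^ (n - k) := by
  induction k with
  | zero => simp
  | succ k ih =>
    rw [pow_succ', Module.End.mul_apply, ih, map_smul, hD, smul_smul, Nat.descFactorial_succ,
      Nat.sub_sub, Nat.cast_mul, mul_comm]

theorem geom_sum_smul_pow_sub_eq_mul_X (q : R) {Xop D D1 : Module.End R R[X]}
    (hX : ∀ n : ℕ, Xop (X ^ n) = X ^ (n + 1))
    (hD : ∀ n : ℕ, D (X ^ n) = (n : R) • X ^ (n - 1))
    (hD1 : ∀ n : ℕ, D1 (X ^ n) = (∑ i ∈ range n, q ^ i) • X ^ (n - 1)) (k : ℕ) :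
    (∑ i ∈ range (k + 1), q ^ i) • D ^ (k + 1) - ((k + 1 : R) * q ^ (k + 1)) • (D1 * D ^ k)
      = (D ^ (k + 1) * D1 - q ^ (k + 1) • (D1 * D ^ (k + 1))) * Xop := by
  refine Polynomial.linearMap_ext_X_pow fun n => ?_
  simp only [LinearMap.sub_apply, LinearMap.smul_apply, Module.End.mul_apply, hX, hD1,
    Module.End.pow_apply_X_pow_of_apply_X_pow hD, map_smul, smul_smul, Nat.add_sub_cancel,
    Nat.add_sub_add_right, Nat.sub_sub]
  rw [← sub_smul, ← sub_smul, geom_sum_mul_descFactorial_sub_eq]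

end

theorem stmt15_general {K : Type*} [Field K] (q : K)
    (Xop D D1 Dm1 : Module.End K (Polynomial K))
    (hX : ∀ n : ℕ, Xop (X ^ n) = X ^ (n + 1))
    (hD : ∀ n : ℕ, D (X ^ n) = (n : K) • X ^ (n - 1))
    (hD1 : ∀ n : ℕ, D1 (X ^ n) = (∑ i ∈ Finset.range n, q ^ i) • X ^ (n - 1))
    (j : ℕ) (hj : 1 ≤ j) :
    ∃ u ∈ Algebra.adjoin K {Xop, D, D1, Dm1},
      (∑ i ∈ Finset.range j, q ^ i) • D ^ j - ((j : K) * q ^ j) • (D1 * D ^ (j - 1))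
        = u * Xop := by
  obtain ⟨k, rfl⟩ := Nat.exists_eq_add_of_le' hj
  have hD_mem : D ∈ Algebra.adjoin K {Xop, D, D1, Dm1} := Algebra.subset_adjoin (by simp)
  have hD1_mem : D1 ∈ Algebra.adjoin K {Xop, D, D1, Dm1} := Algebra.subset_adjoin (by simp)
  refine ⟨D ^ (k + 1) * D1 - q ^ (k + 1) • (D1 * D ^ (k + 1)), ?_, ?_⟩
  · exact sub_mem (mul_mem (pow_mem hD_mem _) hD1_mem)
      (Subalgebra.smul_mem _ (mul_mem hD1_mem (pow_mem hD_mem _)) _)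
  · simpa using geom_sum_smul_pow_sub_eq_mul_X q hX hD hD1 k

/-- In the algebra `D` generated by `x, ∂, ∂₁, ∂₋₁` acting on `K[x]`, for all `j ≥ 1`
one has `[j]_q ∂ʲ ≡ j qʲ ∂₁ ∂^{j-1} (mod Dx)`, i.e. the difference lies in the left
ideal `Dx = {u x : u ∈ D}`. -/
theorem stmt15 {K : Type*} [Field K] [CharZero K] (q : K) (hq : Transcendental ℚ q)
    (Xop D D1 Dm1 : Module.End K (Polynomial K))
    (hX : ∀ n : ℕ, Xop (X ^ n) = X ^ (n + 1))
    (hD : ∀ n : ℕ, D (X ^ n) = (n : K) • X ^ (n - 1))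
    (hD1 : ∀ n : ℕ, D1 (X ^ n) = (∑ i ∈ Finset.range n, q ^ i) • X ^ (n - 1))
    (hDm1 : ∀ n : ℕ, Dm1 (X ^ n) = (∑ i ∈ Finset.range n, (q⁻¹) ^ i) • X ^ (n - 1))
    (j : ℕ) (hj : 1 ≤ j) :
    ∃ u ∈ Algebra.adjoin K {Xop, D, D1, Dm1},
      (∑ i ∈ Finset.range j, q ^ i) • D ^ j - ((j : K) * q ^ j) • (D1 * D ^ (j - 1))
        = u * Xop :=
  stmt15_general q Xop D D1 Dm1 hX hD hD1 j hj
end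

section
/- Let P be the K-algebra generated by x₁, x₂, x₃ with relations x₂x₁ = q²x₁x₂, x₃x₁ = qx₁x₃, x₃x₂ = q^{-1}x₂x₃, where q ∈ K*. Then the elements c = x₃² - q x₁x₂ and d = x₁x₂ are normal in P (i.e. cP = Pc and dP = Pd). -/
/-!
The defining relations are homogeneous in each generator, so rescaling `xᵢ ↦ aᵢ xᵢ` is an
algebra endomorphism `σₐ` of `P`, an automorphism when all `aᵢ ≠ 0`. Both `c` and `d`
satisfy `e xᵢ = aᵢ xᵢ e` for `a = (q², q⁻², 1)`, hence `e z = σₐ(z) e` for every `z`, and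
surjectivity of `σₐ` turns this into `eP = Pe`.
-/

open FreeAlgebra

def IsNormalElem {R : Type*} [Semiring R] (e : R) : Prop :=
  ∀ z, (∃ u, z = e * u) ↔ (∃ u, z = u * e)

theorem isNormalElem_of_mul_eq_mul {R : Type*} [Semiring R] {e : R} {σ : R → R}
    (hσ : Function.Surjective σ) (h : ∀ z, e * z = σ z * e) : IsNormalElem e := by
  intro z
  constructor
  · rintro ⟨u, rfl⟩
    exact ⟨σ u, h u⟩
  · rintro ⟨u, rfl⟩
    obtain ⟨v, rfl⟩ := hσ u
    exact ⟨v, (h v).symm⟩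

section TwistedCentralizer

variable {R A : Type*} [CommSemiring R] [Semiring A] [Algebra R A]

def twistedCentralizer (σ : A →ₐ[R] A) (e : A) : Subalgebra R A where
  carrier := {z | e * z = σ z * e}
  mul_mem' {z w} hz hw := by
    simp only [Set.mem_ofPred_eq, map_mul] at *
    rw [← mul_assoc, hz, mul_assoc, hw, mul_assoc]
  add_mem' {z w} hz hw := by
    simp only [Set.mem_ofPred_eq, map_add] at *
    rw [mul_add, add_mul, hz, hw]
  algebraMap_mem' r := by
    simp only [Set.mem_ofPred_eq, AlgHom.commutes]
    exact (Algebra.commutes r e).symm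

theorem RingQuot.subalgebra_eq_top_of_mkAlgHom_ι_mem {X : Type*}
    {s : FreeAlgebra R X → FreeAlgebra R X → Prop} {S : Subalgebra R (RingQuot s)}
    (h : ∀ i, RingQuot.mkAlgHom R s (ι R i) ∈ S) : S = ⊤ := by
  refine eq_top_iff.2 fun z _ => ?_
  obtain ⟨w, rfl⟩ := RingQuot.mkAlgHom_surjective R s z
  have hle : Algebra.adjoin R (Set.range (ι R)) ≤ S.comap (RingQuot.mkAlgHom R s) :=
    Algebra.adjoin_le (Set.range_subset_iff.2 h)
  exact hle (by simp [adjoin_range_ι])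

theorem RingQuot.mul_eq_map_mul_of_ι {X : Type*}
    {s : FreeAlgebra R X → FreeAlgebra R X → Prop} {σ : RingQuot s →ₐ[R] RingQuot s}
    {e : RingQuot s}
    (h : ∀ i, e * RingQuot.mkAlgHom R s (ι R i) = σ (RingQuot.mkAlgHom R s (ι R i)) * e)
    (z : RingQuot s) : e * z = σ z * e := by
  have htop : twistedCentralizer σ e = ⊤ := RingQuot.subalgebra_eq_top_of_mkAlgHom_ι_mem h
  exact (htop ▸ Algebra.mem_top : z ∈ twistedCentralizer σ e)

end TwistedCentralizer

section SkewPolynomial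

variable {K : Type*} [Field K] (q : K)

/-- The paper's generators `x₁, x₂, x₃` are `ι K 0, ι K 1, ι K 2` (so `x₁` is `gen q 0`). -/
def skewRel (x y : FreeAlgebra K (Fin 3)) : Prop :=
  (x = ι K 1 * ι K 0 ∧ y = (q ^ 2) • (ι K 0 * ι K 1)) ∨
    (x = ι K 2 * ι K 0 ∧ y = q • (ι K 0 * ι K 2)) ∨
    (x = ι K 2 * ι K 1 ∧ y = q⁻¹ • (ι K 1 * ι K 2))

def gen (i : Fin 3) : RingQuot (skewRel q) := RingQuot.mkAlgHom K (skewRel q) (ι K i)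

local notation "x₁" => gen q 0
local notation "x₂" => gen q 1
local notation "x₃" => gen q 2

theorem gen_one_mul_gen_zero : x₂ * x₁ = q ^ 2 • (x₁ * x₂) := by
  simpa [gen] using RingQuot.mkAlgHom_rel K (s := skewRel q) (Or.inl ⟨rfl, rfl⟩)

theorem gen_two_mul_gen_zero : x₃ * x₁ = q • (x₁ * x₃) := by
  simpa [gen] using RingQuot.mkAlgHom_rel K (s := skewRel q) (Or.inr (Or.inl ⟨rfl, rfl⟩))

theorem gen_two_mul_gen_one : x₃ * x₂ = q⁻¹ • (x₂ * x₃) := by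
  simpa [gen] using RingQuot.mkAlgHom_rel K (s := skewRel q) (Or.inr (Or.inr ⟨rfl, rfl⟩))

theorem gen_one_mul_gen_zero_mul (t : RingQuot (skewRel q)) :
    x₂ * (x₁ * t) = q ^ 2 • (x₁ * (x₂ * t)) := by
  rw [← mul_assoc, gen_one_mul_gen_zero, smul_mul_assoc, mul_assoc]

theorem gen_two_mul_gen_zero_mul (t : RingQuot (skewRel q)) :
    x₃ * (x₁ * t) = q • (x₁ * (x₃ * t)) := by
  rw [← mul_assoc, gen_two_mul_gen_zero, smul_mul_assoc, mul_assoc]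

theorem gen_two_mul_gen_one_mul (t : RingQuot (skewRel q)) :
    x₃ * (x₂ * t) = q⁻¹ • (x₂ * (x₃ * t)) := by
  rw [← mul_assoc, gen_two_mul_gen_one, smul_mul_assoc, mul_assoc]

def scale (a : Fin 3 → K) : RingQuot (skewRel q) →ₐ[K] RingQuot (skewRel q) :=
  RingQuot.liftAlgHom K ⟨lift K fun i => a i • gen q i, by
    rintro x y (⟨rfl, rfl⟩ | ⟨rfl, rfl⟩ | ⟨rfl, rfl⟩) <;>
      simp only [map_mul, map_smul, lift_ι_apply, smul_mul_smul_comm, gen_one_mul_gen_zero,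
        gen_two_mul_gen_zero, gen_two_mul_gen_one, smul_smul, mul_comm]⟩

@[simp]
theorem scale_gen (a : Fin 3 → K) (i : Fin 3) : scale q a (gen q i) = a i • gen q i := by
  simp [scale, gen, RingQuot.liftAlgHom_mkAlgHom_apply]

theorem skewAlgHom_ext {B : Type*} [Semiring B] [Algebra K B]
    {f g : RingQuot (skewRel q) →ₐ[K] B} (h : ∀ i, f (gen q i) = g (gen q i)) : f = g :=
  RingQuot.ringQuot_ext' _ _ _ (FreeAlgebra.hom_ext (funext h))

theorem scale_comp_scale (a b : Fin 3 → K) : (scale q a).comp (scale q b) = scale q (a * b) :=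
  skewAlgHom_ext q fun i => by simp [smul_smul, mul_comm]

theorem scale_one : scale q 1 = AlgHom.id K _ :=
  skewAlgHom_ext q fun i => by simp

theorem scale_surjective {a : Fin 3 → K} (ha : ∀ i, a i ≠ 0) : Function.Surjective (scale q a) :=
  fun z => ⟨scale q a⁻¹ z, by
    have : a * a⁻¹ = 1 := funext fun i => mul_inv_cancel₀ (ha i)
    rw [← AlgHom.comp_apply, scale_comp_scale, this, scale_one, AlgHom.id_apply]⟩

theorem isNormalElem_of_mul_gen {e : RingQuot (skewRel q)} {a : Fin 3 → K} (ha : ∀ i, a i ≠ 0)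
    (h : ∀ i, e * gen q i = a i • gen q i * e) : IsNormalElem e :=
  isNormalElem_of_mul_eq_mul (scale_surjective q ha)
    (RingQuot.mul_eq_map_mul_of_ι fun i =>
      show e * gen q i = scale q a (gen q i) * e by rw [scale_gen, h])

variable {q}

def normalTwist (q : K) : Fin 3 → K := ![q ^ 2, (q ^ 2)⁻¹, 1]

theorem normalTwist_ne_zero (hq : q ≠ 0) (i : Fin 3) : normalTwist q i ≠ 0 := by
  fin_cases i <;> simp [normalTwist, hq]

theorem d_mul_gen (hq : q ≠ 0) (i : Fin 3) :
    (x₁ * x₂) * gen q i = normalTwist q i • gen q i * (x₁ * x₂) := by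
  fin_cases i <;>
    simp only [normalTwist, Fin.zero_eta, Fin.mk_one, Fin.reduceFinMk, Matrix.cons_val_zero,
      Matrix.cons_val_one, Matrix.cons_val, one_smul, mul_assoc, smul_mul_assoc, mul_smul_comm,
      smul_smul, gen_one_mul_gen_zero, gen_two_mul_gen_one, gen_one_mul_gen_zero_mul,
      gen_two_mul_gen_zero_mul] <;>
    match_scalars <;> field_simp

theorem c_mul_gen (hq : q ≠ 0) (i : Fin 3) :
    (x₃ * x₃ - q • (x₁ * x₂)) * gen q i =
      normalTwist q i • gen q i * (x₃ * x₃ - q • (x₁ * x₂)) := by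
  fin_cases i <;>
    simp only [normalTwist, Fin.zero_eta, Fin.mk_one, Fin.reduceFinMk, Matrix.cons_val_zero,
      Matrix.cons_val_one, Matrix.cons_val, one_smul, sub_mul, mul_sub, mul_assoc, smul_mul_assoc,
      mul_smul_comm, smul_smul, gen_one_mul_gen_zero, gen_two_mul_gen_zero, gen_two_mul_gen_one,
      gen_one_mul_gen_zero_mul, gen_two_mul_gen_zero_mul, gen_two_mul_gen_one_mul] <;>
    match_scalars <;> field_simp

end SkewPolynomial

/-- In `P = K⟨x₁,x₂,x₃⟩/(x₂x₁ = q²x₁x₂, x₃x₁ = qx₁x₃, x₃x₂ = q⁻¹x₂x₃)`, the elements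
`c = x₃² - q x₁x₂` and `d = x₁x₂` are normal, i.e. `cP = Pc` and `dP = Pd`. -/
theorem stmt19 {K : Type*} [Field K] (q : K) (hq : q ≠ 0)
    (rel : FreeAlgebra K (Fin 3) → FreeAlgebra K (Fin 3) → Prop)
    (hrel : ∀ x y, rel x y ↔
      ((x = ι K 1 * ι K 0 ∧ y = (q ^ 2) • (ι K 0 * ι K 1)) ∨
       (x = ι K 2 * ι K 0 ∧ y = q • (ι K 0 * ι K 2)) ∨
       (x = ι K 2 * ι K 1 ∧ y = q⁻¹ • (ι K 1 * ι K 2)))) :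
    let m := RingQuot.mkAlgHom K rel
    let c := m (ι K 2) * m (ι K 2) - q • (m (ι K 0) * m (ι K 1))
    let d := m (ι K 0) * m (ι K 1)
    (∀ z : RingQuot rel, (∃ u, z = c * u) ↔ (∃ u, z = u * c)) ∧
    (∀ z : RingQuot rel, (∃ u, z = d * u) ↔ (∃ u, z = u * d)) := by
  obtain rfl : rel = skewRel q := funext₂ fun x y => propext (hrel x y)
  exact ⟨isNormalElem_of_mul_gen q (normalTwist_ne_zero hq) (c_mul_gen hq),
    isNormalElem_of_mul_gen q (normalTwist_ne_zero hq) (d_mul_gen hq)⟩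
end
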